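/- arXiv:2301.10091 — 3 statements merged into one kernel-verified Lean document; each statement's English description precedes it below -/
import Mathlib

section
/- Let p be a polynomial in d complex variables of total degree at most n with no zeros in the open unit ball B_d of C^d. Then the branch of log p on B_d normalized by its value at 0 satisfies |Im(log p(z) − log p(0))| ≤ nπ for all z in B_d. -/
/-!
The slice `q(λ) = p(λz)` is a one-variable polynomial of degree at most `n` without zeros on
`[0, 1]`, and the integrand is `q'/q = ∑ 1 / (t - r)` over the roots `r` of `q`. The imaginary
part of `∫₀¹ dt / (t - r)` is a difference of two arctangents (the angle under which `r` sees the
segment `[0, 1]`), so each root contributes at most `π`.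
-/

open Polynomial MeasureTheory Set Real

theorem abs_integral_div_sq_add_sq_le_pi (a b c β : ℝ) :
    |∫ t in a..b, β / ((t - c) ^ 2 + β ^ 2)| ≤ π := by
  rcases eq_or_ne β 0 with rfl | hβ
  · simp [pi_pos.le]
  have hderiv (t : ℝ) :
      HasDerivAt (fun t ↦ arctan ((t - c) / β)) (β / ((t - c) ^ 2 + β ^ 2)) t := by
    refine ((hasDerivAt_id' t).sub_const c |>.div_const β).arctan.congr_deriv ?_
    field_simp
    ring
  rw [intervalIntegral.integral_eq_sub_of_hasDerivAt (fun t _ ↦ hderiv t)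
    ((Continuous.div (by fun_prop) (by fun_prop) fun t ↦ by positivity).intervalIntegrable _ _)]
  obtain ⟨hb₁, hb₂⟩ := arctan_mem_Ioo ((b - c) / β)
  obtain ⟨ha₁, ha₂⟩ := arctan_mem_Ioo ((a - c) / β)
  rw [abs_le]; constructor <;> linarith

theorem Complex.im_one_div_ofReal_sub (t : ℝ) (r : ℂ) :
    (1 / ((t : ℂ) - r)).im = r.im / ((t - r.re) ^ 2 + r.im ^ 2) := by
  simp [Complex.normSq_apply]
  ring

theorem abs_im_integral_one_div_ofReal_sub_le (a b : ℝ) (r : ℂ) :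
    |(∫ t in a..b, 1 / ((t : ℂ) - r)).im| ≤ π := by
  by_cases h : IntervalIntegrable (fun t : ℝ ↦ 1 / ((t : ℂ) - r)) volume a b
  · rw [← RCLike.im_to_complex, ← intervalIntegral.intervalIntegral_im h]
    simp only [RCLike.im_to_complex, Complex.im_one_div_ofReal_sub]
    exact abs_integral_div_sq_add_sq_le_pi a b r.re r.im
  · rw [intervalIntegral.integral_undef h]
    simp [pi_pos.le]

theorem continuousOn_one_div_ofReal_sub {s : Set ℝ} {r : ℂ} (hr : ∀ t ∈ s, (t : ℂ) ≠ r) :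
    ContinuousOn (fun t : ℝ ↦ 1 / ((t : ℂ) - r)) s :=
  continuousOn_const.div (by fun_prop) fun t ht ↦ sub_ne_zero.mpr (hr t ht)

theorem abs_im_integral_sum_one_div_ofReal_sub_le {a b : ℝ} (s : Multiset ℂ)
    (hs : ∀ r ∈ s, ∀ t ∈ uIcc a b, (t : ℂ) ≠ r) :
    |(∫ t in a..b, (s.map fun r ↦ 1 / ((t : ℂ) - r)).sum).im| ≤ Multiset.card s * π := by
  induction s using Multiset.induction_on with
  | empty => simp
  | cons r s ih =>
    have hs' : ∀ r' ∈ s, ∀ t ∈ uIcc a b, (t : ℂ) ≠ r' :=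
      fun r' hr' ↦ hs r' (Multiset.mem_cons_of_mem hr')
    simp only [Multiset.map_cons, Multiset.sum_cons, Multiset.card_cons]
    rw [intervalIntegral.integral_add
      (continuousOn_one_div_ofReal_sub (hs r (Multiset.mem_cons_self r s))).intervalIntegrable
      (continuousOn_multiset_sum s fun r' hr' ↦
        continuousOn_one_div_ofReal_sub (hs' r' hr')).intervalIntegrable,
      Complex.add_im]
    push_cast
    calc _ ≤ _ := abs_add_le _ _
      _ ≤ π + s.card * π := add_le_add (abs_im_integral_one_div_ofReal_sub_le a b r) (ih hs')
      _ = _ := by ring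

theorem Polynomial.abs_im_integral_eval_derivative_div_eval_le {q : ℂ[X]} {a b : ℝ}
    (hq : ∀ t ∈ uIcc a b, q.eval (t : ℂ) ≠ 0) :
    |(∫ t in a..b, q.derivative.eval (t : ℂ) / q.eval (t : ℂ)).im| ≤ q.natDegree * π := by
  have hsplit : q.Splits := IsAlgClosed.splits q
  rw [intervalIntegral.integral_congr fun t ht ↦
    hsplit.eval_derivative_div_eval_of_ne_zero (hq t ht), hsplit.natDegree_eq_card_roots]
  refine abs_im_integral_sum_one_div_ofReal_sub_le _ fun r hr t ht htr ↦ hq t ht ?_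
  rw [htr]
  exact isRoot_of_mem_roots hr

namespace MvPolynomial

variable {σ R : Type*} [CommRing R]

noncomputable def slice (p : MvPolynomial σ R) (z : σ → R) : Polynomial R :=
  aeval (fun i ↦ Polynomial.C (z i) * Polynomial.X) p

theorem eval_slice (p : MvPolynomial σ R) (z : σ → R) (w : R) :
    (p.slice z).eval w = eval (fun i ↦ w * z i) p := by
  induction p using MvPolynomial.induction_on <;> simp_all [slice, mul_comm w]

theorem natDegree_slice_le (p : MvPolynomial σ R) (z : σ → R) :
    (p.slice z).natDegree ≤ p.totalDegree := by
  conv_lhs => rw [slice, p.as_sum, map_sum]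
  refine Polynomial.natDegree_sum_le_of_forall_le _ _ fun m hm ↦ ?_
  rw [aeval_monomial, Algebra.algebraMap_eq_smul_one, smul_mul_assoc, one_mul]
  refine (Polynomial.natDegree_smul_le _ _).trans <| (Polynomial.natDegree_prod_le _ _).trans ?_
  refine (Finset.sum_le_sum fun i _ ↦ Polynomial.natDegree_pow_le_of_le (m i)
    (Polynomial.natDegree_C_mul_le _ _ |>.trans Polynomial.natDegree_X_le)).trans ?_
  simpa [Finsupp.sum] using le_totalDegree hm

end MvPolynomial

open Metric in
/-- If `p` is a polynomial in `d` variables of total degree at most `n` with no zeros in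
the open unit ball of `ℂ^d`, then the branch of `log p` normalized at `0`, obtained by
integrating `(d/dt) log p(tz)` along slices, satisfies `|Im (log p z − log p 0)| ≤ n π`. -/
theorem im_log_mvpoly_bound (d n : ℕ) (p : MvPolynomial (Fin d) ℂ)
    (hdeg : p.totalDegree ≤ n)
    (hnz : ∀ z ∈ ball (0 : EuclideanSpace ℂ (Fin d)) 1,
      MvPolynomial.eval (fun i => z i) p ≠ 0) :
    ∀ z ∈ ball (0 : EuclideanSpace ℂ (Fin d)) 1,
      |(∫ t in (0:ℝ)..1,
          deriv (fun w : ℂ => MvPolynomial.eval (fun i => w * z i) p) (t : ℂ)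
            / MvPolynomial.eval (fun i => (t : ℂ) * z i) p).im|
        ≤ n * Real.pi := by
  intro z hz
  have hq : ∀ t ∈ uIcc (0 : ℝ) 1, (p.slice z).eval (t : ℂ) ≠ 0 := by
    intro t ht
    rw [uIcc_of_le zero_le_one] at ht
    have htz : (t : ℂ) • z ∈ ball (0 : EuclideanSpace ℂ (Fin d)) 1 := by
      rw [mem_ball_zero_iff, norm_smul, Complex.norm_real, Real.norm_of_nonneg ht.1]
      exact (mul_le_of_le_one_left (norm_nonneg z) ht.2).trans_lt (mem_ball_zero_iff.mp hz)
    simpa [MvPolynomial.eval_slice] using hnz _ htz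
  simp only [← MvPolynomial.eval_slice, Polynomial.deriv]
  calc _ ≤ (p.slice z).natDegree * π := (p.slice z).abs_im_integral_eval_derivative_div_eval_le hq
    _ ≤ n * π := by
      gcongr
      exact_mod_cast (p.natDegree_slice_le z).trans hdeg
end

section
/- Define h(x) = x²/(1 + log x)² for x ≥ 1. Then for every λ ∈ C with |λ| ≥ 1, the integral over the unit disk (1/π)∫_D h(2|λ|/|z − λ|) dA(z) is at most 16. -/
/-!
Write `r = ‖λ‖` and `t = ‖z - λ‖ ∈ (r - 1, r + 1)`. If `r ≥ 5/4`, then `2r/t ∈ [1, 10]`, where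
`h ≤ 16` because `x ≤ 4 (1 + log x)` on that interval. If `r ≤ 5/4`, then `h (2r/t) ≤ (2r)² ≤ 25/4`
where `t > 1`, and the part where `t ≤ 1` is bounded by its integral over the whole plane. In polar
coordinates about `λ` that integral is `2π ∫₀¹ (2r)² dt / (t (c - log t)²) = 8πr²/c` with
`c = 1 + log 2r`, since the primitive `(c - log t)⁻¹` tends to `0` at `0⁺`. Either way the integral
is at most `16π`.
-/

open MeasureTheory Real Set Metric Filter Topology

section FTC

variable {g g' : ℝ → ℝ} {a b L : ℝ}

/- The primitive need not extend continuously to `a` as it stands (for `(c - log t)⁻¹` at `0`,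
`log 0 = 0` gives the value `c⁻¹`), so it is redefined there as its limit. -/
theorem continuousOn_update_Icc_of_hasDerivAt_of_tendsto
    (hderiv : ∀ x ∈ Ioc a b, HasDerivAt g (g' x) x) (hlim : Tendsto g (𝓝[>] a) (𝓝 L)) :
    ContinuousOn (Function.update g a L) (Icc a b) := by
  rw [continuousOn_update_iff, Icc_sdiff_left]
  exact ⟨fun x hx => (hderiv x hx).continuousAt.continuousWithinAt,
    fun _ => hlim.mono_left (nhdsWithin_mono _ Ioc_subset_Ioi_self)⟩

theorem hasDerivAt_update_of_mem_Ioo (hderiv : ∀ x ∈ Ioc a b, HasDerivAt g (g' x) x)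
    {x : ℝ} (hx : x ∈ Ioo a b) : HasDerivAt (Function.update g a L) (g' x) x :=
  (hderiv x (Ioo_subset_Ioc_self hx)).congr_of_eventuallyEq <| by
    filter_upwards [Ioi_mem_nhds hx.1] with y hy using Function.update_of_ne hy.ne' _ _

theorem integrableOn_Ioc_deriv_of_nonneg_of_tendsto
    (hderiv : ∀ x ∈ Ioc a b, HasDerivAt g (g' x) x) (hpos : ∀ x ∈ Ioo a b, 0 ≤ g' x)
    (hlim : Tendsto g (𝓝[>] a) (𝓝 L)) : IntegrableOn g' (Ioc a b) :=
  intervalIntegral.integrableOn_deriv_of_nonneg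
    (continuousOn_update_Icc_of_hasDerivAt_of_tendsto hderiv hlim)
    (fun _ hx => hasDerivAt_update_of_mem_Ioo hderiv hx) hpos

theorem integral_Ioc_of_hasDerivAt_of_nonneg_of_tendsto (hab : a < b)
    (hderiv : ∀ x ∈ Ioc a b, HasDerivAt g (g' x) x) (hpos : ∀ x ∈ Ioo a b, 0 ≤ g' x)
    (hlim : Tendsto g (𝓝[>] a) (𝓝 L)) : ∫ x in Ioc a b, g' x = g b - L := by
  rw [← intervalIntegral.integral_of_le hab.le,
    intervalIntegral.integral_eq_sub_of_hasDerivAt_of_le hab.le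
      (continuousOn_update_Icc_of_hasDerivAt_of_tendsto hderiv hlim)
      (fun _ hx => hasDerivAt_update_of_mem_Ioo hderiv hx)
      ((intervalIntegrable_iff_integrableOn_Ioc_of_le hab.le).2
        (integrableOn_Ioc_deriv_of_nonneg_of_tendsto hderiv hpos hlim)),
    Function.update_self, Function.update_of_ne hab.ne']

end FTC

section InvSubLog

variable {c : ℝ}

theorem hasDerivAt_inv_sub_log {t : ℝ} (ht : 0 < t) (hct : log t ≠ c) :
    HasDerivAt (fun t => (c - log t)⁻¹) (t * (c - log t) ^ 2)⁻¹ t := by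
  refine (((hasDerivAt_log ht.ne').const_sub c).fun_inv (sub_ne_zero.2 hct.symm)).congr_deriv ?_
  rw [neg_neg, div_eq_mul_inv, mul_inv]

theorem tendsto_inv_sub_log_nhdsGT_zero (c : ℝ) :
    Tendsto (fun t => (c - log t)⁻¹) (𝓝[>] 0) (𝓝 0) :=
  tendsto_inv_atTop_zero.comp <|
    tendsto_atTop_add_const_left _ c (tendsto_neg_atBot_atTop.comp tendsto_log_nhdsGT_zero)

theorem hasDerivAt_inv_sub_log_of_mem_Ioc (hc : 0 < c) :
    ∀ t ∈ Ioc (0 : ℝ) 1, HasDerivAt (fun t => (c - log t)⁻¹) (t * (c - log t) ^ 2)⁻¹ t :=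
  fun _ ht => hasDerivAt_inv_sub_log ht.1 ((log_nonpos ht.1.le ht.2).trans_lt hc).ne

theorem inv_mul_sub_log_sq_nonneg : ∀ t ∈ Ioo (0 : ℝ) 1, 0 ≤ (t * (c - log t) ^ 2)⁻¹ :=
  fun _ ht => inv_nonneg.2 (mul_nonneg ht.1.le (sq_nonneg _))

theorem integrableOn_inv_mul_sub_log_sq (hc : 0 < c) :
    IntegrableOn (fun t => (t * (c - log t) ^ 2)⁻¹) (Ioc 0 1) :=
  integrableOn_Ioc_deriv_of_nonneg_of_tendsto (hasDerivAt_inv_sub_log_of_mem_Ioc hc)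
    inv_mul_sub_log_sq_nonneg (tendsto_inv_sub_log_nhdsGT_zero c)

theorem integral_inv_mul_sub_log_sq (hc : 0 < c) :
    ∫ t in Ioc 0 1, (t * (c - log t) ^ 2)⁻¹ = c⁻¹ := by
  rw [integral_Ioc_of_hasDerivAt_of_nonneg_of_tendsto one_pos
    (hasDerivAt_inv_sub_log_of_mem_Ioc hc) inv_mul_sub_log_sq_nonneg
    (tendsto_inv_sub_log_nhdsGT_zero c)]
  simp

end InvSubLog

noncomputable def h (x : ℝ) : ℝ := x ^ 2 / (1 + log x) ^ 2

theorem h_nonneg (x : ℝ) : 0 ≤ h x := by unfold h; positivity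

@[fun_prop]
theorem measurable_h : Measurable h := by unfold h; fun_prop

theorem h_le_sq {x : ℝ} (hx : 1 ≤ x) : h x ≤ x ^ 2 :=
  div_le_self (sq_nonneg x) (one_le_pow₀ (by linarith [log_nonneg hx]))

theorem h_le_sixteen {x : ℝ} (hx : 1 ≤ x) (hx' : x ≤ 10) : h x ≤ 16 := by
  have hlin : x ≤ 4 * (1 + log x) := by
    rcases le_or_gt x 4 with hx4 | hx4
    · linarith [log_nonneg hx]
    · have hx0 : 0 < x := by linarith
      have hlog4 : log 4 = 2 * log 2 := by
        rw [show (4 : ℝ) = 2 ^ 2 by norm_num, log_pow, Nat.cast_ofNat]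
      have hlow : 1 - 4 / x ≤ log x - 2 * log 2 := by
        have := one_sub_inv_le_log_of_pos (div_pos hx0 four_pos)
        rwa [inv_div, log_div hx0.ne' four_ne_zero, hlog4] at this
      have hrecip : 4 / x ≤ 29 / 10 - x / 4 := by rw [div_le_iff₀ hx0]; nlinarith
      linarith [log_two_gt_d9]
  have hlog := log_nonneg hx
  unfold h
  rw [div_le_iff₀ (by positivity)]
  nlinarith [mul_self_le_mul_self (by linarith) hlin]

theorem mul_h_div {R t : ℝ} (hR : 0 < R) (ht : 0 < t) :
    t * h (R / t) = R ^ 2 * (t * (1 + log R - log t) ^ 2)⁻¹ := by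
  rw [h, log_div hR.ne' ht.ne', add_sub_assoc']
  field_simp

theorem h_div_le_indicator_add {R t : ℝ} (ht : 0 < t) (htR : t ≤ R) (hR : R ≤ 5 / 2) :
    h (R / t) ≤ (Iic 1).indicator (fun t => h (R / t)) t + 25 / 4 := by
  by_cases ht1 : t ∈ Iic 1
  · rw [indicator_of_mem ht1]
    linarith
  · have hRt : R / t ≤ R := div_le_self (ht.le.trans htR) (le_of_lt (not_le.1 ht1))
    rw [indicator_of_notMem ht1, zero_add]
    calc h (R / t) ≤ (R / t) ^ 2 := h_le_sq ((one_le_div ht).2 htR)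
      _ ≤ (5 / 2) ^ 2 := pow_le_pow_left₀ (div_nonneg (ht.le.trans htR) ht.le) (hRt.trans hR) 2
      _ = 25 / 4 := by norm_num

theorem norm_sub_mem_Ioo_of_norm_lt_one {E : Type*} [SeminormedAddCommGroup E] {z : E}
    (hz : ‖z‖ < 1) (w : E) : ‖z - w‖ ∈ Ioo (‖w‖ - 1) (‖w‖ + 1) := by
  constructor
  · linarith [norm_sub_norm_le w z, norm_sub_rev w z]
  · linarith [norm_sub_le z w]

theorem measureReal_ball_zero_one : volume.real (ball (0 : ℂ) 1) = π := by
  simp [Measure.real, Complex.volume_ball]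

theorem mul_indicator_h_div_eqOn {R : ℝ} (hR : 0 < R) :
    EqOn (fun t : ℝ => t ^ (Module.finrank ℝ ℂ - 1) • (Iic 1).indicator (fun t => h (R / t)) t)
      ((Iic 1).indicator fun t => R ^ 2 * (t * (1 + log R - log t) ^ 2)⁻¹) (Ioi 0) := by
  intro t ht
  by_cases ht1 : t ∈ Iic 1
  · simp [ht1, Complex.finrank_real_complex, mul_h_div hR ht]
  · simp [ht1]

theorem integrable_indicator_h_div_norm {R : ℝ} (hR : 0 < R) (hc : 0 < 1 + log R) :
    Integrable fun w : ℂ => (Iic 1).indicator (fun t => h (R / t)) ‖w‖ := by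
  rw [integrable_fun_norm_addHaar, integrableOn_congr_fun (mul_indicator_h_div_eqOn hR)
    measurableSet_Ioi, integrableOn_indicator_iff measurableSet_Iic, Iic_inter_Ioi]
  exact (integrableOn_inv_mul_sub_log_sq hc).const_mul _

theorem integral_indicator_h_div_norm {R : ℝ} (hR : 0 < R) (hc : 0 < 1 + log R) :
    ∫ w : ℂ, (Iic 1).indicator (fun t => h (R / t)) ‖w‖ = 2 * π * (R ^ 2 / (1 + log R)) := by
  rw [integral_fun_norm_addHaar, setIntegral_congr_fun measurableSet_Ioi
    (mul_indicator_h_div_eqOn hR), setIntegral_indicator measurableSet_Iic, Ioi_inter_Iic,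
    integral_const_mul, integral_inv_mul_sub_log_sq hc, measureReal_ball_zero_one,
    Complex.finrank_real_complex]
  simp [div_eq_mul_inv, mul_assoc]

theorem setIntegral_h_le_of_five_fourths_le {lam : ℂ} (hlam : 5 / 4 ≤ ‖lam‖) :
    ∫ z in ball (0 : ℂ) 1, h (2 * ‖lam‖ / ‖z - lam‖) ≤ 16 * π := by
  have hbound : ∀ z ∈ ball (0 : ℂ) 1, ‖h (2 * ‖lam‖ / ‖z - lam‖)‖ ≤ 16 := fun z hz => by
    obtain ⟨hlo, hhi⟩ := norm_sub_mem_Ioo_of_norm_lt_one (mem_ball_zero_iff.1 hz) lam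
    rw [norm_of_nonneg (h_nonneg _)]
    apply h_le_sixteen
    · rw [le_div_iff₀ (by linarith)]; linarith
    · rw [div_le_iff₀ (by linarith)]; linarith
  calc ∫ z in ball (0 : ℂ) 1, h (2 * ‖lam‖ / ‖z - lam‖)
      ≤ ‖∫ z in ball (0 : ℂ) 1, h (2 * ‖lam‖ / ‖z - lam‖)‖ := le_norm_self _
    _ ≤ 16 * volume.real (ball (0 : ℂ) 1) :=
      norm_setIntegral_le_of_norm_le_const measure_ball_lt_top hbound
    _ = 16 * π := by rw [measureReal_ball_zero_one]

theorem setIntegral_h_le_of_le_five_fourths {lam : ℂ} (hlam : 1 ≤ ‖lam‖) (hlam' : ‖lam‖ ≤ 5 / 4) :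
    ∫ z in ball (0 : ℂ) 1, h (2 * ‖lam‖ / ‖z - lam‖) ≤ 16 * π := by
  set R := 2 * ‖lam‖
  set M : ℝ → ℝ := (Iic 1).indicator fun t => h (R / t)
  have hR : 0 < R := by positivity
  have hc : 1 + log 2 ≤ 1 + log R := by gcongr; linarith
  have hc0 : 0 < 1 + log R := by linarith [log_two_gt_d9]
  have hM : Integrable fun z : ℂ => M ‖z - lam‖ :=
    (integrable_indicator_h_div_norm hR hc0).comp_sub_right lam
  have hmajor : ∀ z ∈ ball (0 : ℂ) 1, h (R / ‖z - lam‖) ≤ M ‖z - lam‖ + 25 / 4 := fun z hz => by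
    obtain ⟨hlo, hhi⟩ := norm_sub_mem_Ioo_of_norm_lt_one (mem_ball_zero_iff.1 hz) lam
    exact h_div_le_indicator_add (by linarith) (by linarith) (by linarith)
  have hmajor_int : IntegrableOn (fun z : ℂ => M ‖z - lam‖ + 25 / 4) (ball 0 1) :=
    hM.integrableOn.add (integrableOn_const measure_ball_lt_top.ne)
  have hint : IntegrableOn (fun z : ℂ => h (R / ‖z - lam‖)) (ball 0 1) :=
    hmajor_int.mono' (Measurable.aestronglyMeasurable (by fun_prop)) <| (ae_restrict_iff' measurableSet_ball).2 <|
      .of_forall fun z hz => (norm_of_nonneg (h_nonneg _)).trans_le (hmajor z hz)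
  calc ∫ z in ball (0 : ℂ) 1, h (R / ‖z - lam‖)
      ≤ ∫ z in ball (0 : ℂ) 1, (M ‖z - lam‖ + 25 / 4) :=
        setIntegral_mono_on hint hmajor_int measurableSet_ball hmajor
    _ = (∫ z in ball (0 : ℂ) 1, M ‖z - lam‖) + 25 / 4 * π := by
        rw [integral_add hM.integrableOn (integrableOn_const measure_ball_lt_top.ne),
          setIntegral_const, measureReal_ball_zero_one, smul_eq_mul, mul_comm π]
    _ ≤ (∫ z, M ‖z - lam‖) + 25 / 4 * π := by
        grw [setIntegral_le_integral hM
          (.of_forall fun _ => indicator_nonneg (fun _ _ => h_nonneg _) _)]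
    _ = 2 * π * (R ^ 2 / (1 + log R)) + 25 / 4 * π := by
        rw [integral_sub_right_eq_self (fun w => M ‖w‖), integral_indicator_h_div_norm hR hc0]
    _ ≤ 16 * π := by
        have : R ^ 2 / (1 + log R) ≤ 39 / 8 := by
          rw [div_le_iff₀ hc0]; nlinarith [log_two_gt_d9]
        nlinarith [pi_pos]

/-- With `h x = x ^ 2 / (1 + log x) ^ 2`, for every `λ ∈ ℂ` with `|λ| ≥ 1`,
`(1/π) ∫_{𝔻} h (2|λ|/|z − λ|) dA(z) ≤ 16`. -/
theorem integral_h_bound (lam : ℂ) (hlam : 1 ≤ ‖lam‖) :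
    (1 / Real.pi) * ∫ z in Metric.ball (0 : ℂ) 1,
      (2 * ‖lam‖ / ‖z - lam‖) ^ 2 /
        (1 + Real.log (2 * ‖lam‖ / ‖z - lam‖)) ^ 2 ≤ 16 := by
  rw [one_div_mul_eq_div, div_le_iff₀ pi_pos]
  rcases le_total (5 / 4) ‖lam‖ with hfar | hnear
  · exact setIntegral_h_le_of_five_fourths_le hfar
  · exact setIntegral_h_le_of_le_five_fourths hlam hnear
end

section
/- Let H be a reproducing kernel Hilbert space of functions on a domain with 1 ∈ Mult(H) and ‖1‖_{Mult(H)} = 1, and let φ ∈ Mult(H) with ‖φ‖_{Mult(H)} ≤ 1 and φ not identically 1. If (1 − φ(z)) log(1 − φ(z)) = −φ(z)(1 − Σ_{n=2}^∞ φ(z)^n/(n(n+1))) pointwise wherever |φ(z)| < 1, then the function u = (1 − φ)·log(1 − φ) is a multiplier of H with ‖u‖_{Mult(H)} ≤ 1 + Σ_{n=2}^∞ 1/(n(n+1)) ≤ 3/2. -/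
/-- `T` is the multiplication operator by `φ` on the Hilbert function space realized by
the embedding `e : H →ₗ[ℂ] (X → ℂ)`. -/
def IsMultOp {X H : Type*} [NormedAddCommGroup H] [InnerProductSpace ℂ H]
    (e : H →ₗ[ℂ] (X → ℂ)) (φ : X → ℂ) (T : H →L[ℂ] H) : Prop :=
  ∀ h : H, e (T h) = φ * e h

/-! Every power of `Tφ` is a contraction, so `G = ∑ₙ Tφ ^ (n + 2) / ((n + 2) (n + 3))` converges
absolutely in operator norm, `‖G‖ ≤ ∑ₙ 1 / ((n + 2) (n + 3)) = 1 / 2`, and `-Tφ (1 - G)` has norm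
at most `3 / 2`. The delicate point is that `G` multiplies by
`g = ∑ₙ φ ^ (n + 2) / ((n + 2) (n + 3))`: the evaluations `h ↦ e h x` need not be continuous, so
they cannot be passed through the series. Instead, with `c = φ x`, each `Tφᵏ - cᵏ` factors as
`(Tφ - c) qₖ` with `‖qₖ‖ ≤ (1 - |c|)⁻¹`, so `G - g x` is `Tφ - c` times a convergent series, and
evaluation at `x` kills the range of `Tφ - c`. -/

open Finset

theorem hasSum_one_div_add_two_mul_add_three :
    HasSum (fun n : ℕ => (1 : ℝ) / ((n + 2) * (n + 3))) (1 / 2) := by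
  have partial_sum (m : ℕ) :
      ∑ n ∈ range m, (1 : ℝ) / ((n + 2) * (n + 3)) = 1 / 2 - 1 / ((m + 1 : ℕ) + 1) := by
    induction m with
    | zero => norm_num
    | succ m ih =>
      rw [sum_range_succ, ih]
      push_cast
      field_simp
      ring
  rw [hasSum_iff_tendsto_nat_of_nonneg (fun n => by positivity)]
  simp only [partial_sum]
  simpa using tendsto_const_nhds.sub
    ((tendsto_one_div_add_atTop_nhds_zero_nat (𝕜 := ℝ)).comp (Filter.tendsto_add_atTop_nat 1))

theorem ContinuousLinearMap.norm_pow_le_one {𝕜 E : Type*} [NontriviallyNormedField 𝕜]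
    [SeminormedAddCommGroup E] [NormedSpace 𝕜 E] {T : E →L[𝕜] E} (hT : ‖T‖ ≤ 1) :
    ∀ n : ℕ, ‖T ^ n‖ ≤ 1
  | 0 => norm_id_le
  | n + 1 => by
    rw [pow_succ]
    exact (norm_mul_le _ _).trans (mul_le_one₀ (norm_pow_le_one hT n) (norm_nonneg _) hT)

section PowerBounded

variable {𝕜 𝔸 ι : Type*} [NormedField 𝕜] [NormedRing 𝔸] [NormedAlgebra 𝕜 𝔸]

theorem sub_smul_one_mul_geom_sum₂ (a : 𝔸) (c : 𝕜) (n : ℕ) :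
    (a - c • 1) * ∑ k ∈ range n, c ^ (n - 1 - k) • a ^ k = a ^ n - c ^ n • 1 := by
  have h := (Algebra.commute_algebraMap_right c a).mul_geom_sum₂ n
  simp only [Algebra.algebraMap_eq_smul_one, smul_pow, one_pow, mul_smul_one] at h
  exact h

variable {a : 𝔸}

theorem norm_geom_sum₂_smul_le (ha : ∀ n, ‖a ^ n‖ ≤ 1) {c : 𝕜} (hc : ‖c‖ < 1) (n : ℕ) :
    ‖∑ k ∈ range n, c ^ (n - 1 - k) • a ^ k‖ ≤ (1 - ‖c‖)⁻¹ :=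
  calc ‖∑ k ∈ range n, c ^ (n - 1 - k) • a ^ k‖
      ≤ ∑ k ∈ range n, ‖c‖ ^ (n - 1 - k) := by
        refine (norm_sum_le _ _).trans (sum_le_sum fun k _ => ?_)
        rw [norm_smul, norm_pow]
        exact mul_le_of_le_one_right (by positivity) (ha k)
    _ = ∑ k ∈ range n, ‖c‖ ^ k := sum_range_reflect (‖c‖ ^ ·) n
    _ ≤ (1 - ‖c‖)⁻¹ := by
        rw [← (hasSum_geometric_of_lt_one (norm_nonneg c) hc).tsum_eq]
        exact (summable_geometric_of_lt_one (norm_nonneg c) hc).sum_le_tsum _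
          fun k _ => by positivity

theorem summable_norm_smul_pow (ha : ∀ n, ‖a ^ n‖ ≤ 1) {f : ι → 𝕜} (hf : Summable (‖f ·‖))
    (p : ι → ℕ) :
    Summable (fun i => ‖f i • a ^ p i‖) :=
  hf.of_nonneg_of_le (fun _ => norm_nonneg _) fun _ =>
    (norm_smul_le _ _).trans (mul_le_of_le_one_right (norm_nonneg _) (ha _))

theorem norm_tsum_smul_pow_le (ha : ∀ n, ‖a ^ n‖ ≤ 1) {f : ι → 𝕜} (hf : Summable (‖f ·‖))
    (p : ι → ℕ) :
    ‖∑' i, f i • a ^ p i‖ ≤ ∑' i, ‖f i‖ :=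
  (norm_tsum_le_tsum_norm (summable_norm_smul_pow ha hf p)).trans <|
    (summable_norm_smul_pow ha hf p).tsum_le_tsum (fun _ =>
      (norm_smul_le _ _).trans (mul_le_of_le_one_right (norm_nonneg _) (ha _))) hf

variable [CompleteSpace 𝕜] [CompleteSpace 𝔸]

theorem exists_sub_smul_one_mul_eq_tsum (ha : ∀ n, ‖a ^ n‖ ≤ 1) {c : 𝕜} (hc : ‖c‖ < 1)
    {f : ι → 𝕜} (hf : Summable (‖f ·‖)) (p : ι → ℕ) :
    ∃ r : 𝔸, (a - c • 1) * r = ∑' i, f i • a ^ p i - (∑' i, f i * c ^ p i) • 1 := by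
  set q : ℕ → 𝔸 := fun n => ∑ k ∈ range n, c ^ (n - 1 - k) • a ^ k
  have hq : Summable (fun i => f i • q (p i)) :=
    .of_norm_bounded (hf.mul_right (1 - ‖c‖)⁻¹) fun i =>
      (norm_smul_le _ _).trans (mul_le_mul_of_nonneg_left (norm_geom_sum₂_smul_le ha hc _)
        (norm_nonneg _))
  have hpow : Summable (fun i => f i • a ^ p i) := (summable_norm_smul_pow ha hf p).of_norm
  have hscalar : Summable (fun i => f i * c ^ p i) :=
    .of_norm_bounded hf fun i => by
      rw [norm_mul, norm_pow]
      exact mul_le_of_le_one_right (norm_nonneg _) (pow_le_one₀ (norm_nonneg _) hc.le)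
  refine ⟨∑' i, f i • q (p i), ?_⟩
  rw [← hq.tsum_mul_left, ← hscalar.tsum_smul_const, ← hpow.tsum_sub (hscalar.smul_const _)]
  congr 1 with i
  rw [mul_smul_comm, sub_smul_one_mul_geom_sum₂, smul_sub, smul_smul]

end PowerBounded

namespace IsMultOp

variable {X H ι : Type*} [NormedAddCommGroup H] [InnerProductSpace ℂ H] {e : H →ₗ[ℂ] (X → ℂ)}
  {φ ψ : X → ℂ} {S T : H →L[ℂ] H}

theorem one : IsMultOp e 1 1 := fun h => by simp

theorem mul (hφ : IsMultOp e φ S) (hψ : IsMultOp e ψ T) : IsMultOp e (φ * ψ) (S * T) :=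
  fun h => by rw [mul_apply_eq_comp, hφ, hψ, mul_assoc]

theorem sub (hφ : IsMultOp e φ S) (hψ : IsMultOp e ψ T) : IsMultOp e (φ - ψ) (S - T) :=
  fun h => by rw [sub_apply, map_sub, hφ, hψ, sub_mul]

theorem neg (hφ : IsMultOp e φ S) : IsMultOp e (-φ) (-S) :=
  fun h => by rw [neg_apply, map_neg, hφ, neg_mul]

theorem tsum_smul_pow [CompleteSpace H] (hφ : IsMultOp e φ T) (hT : ∀ n, ‖T ^ n‖ ≤ 1)
    (hφlt : ∀ x, ‖φ x‖ < 1) {f : ι → ℂ} (hf : Summable (‖f ·‖)) (p : ι → ℕ) :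
    IsMultOp e (fun x => ∑' i, f i * φ x ^ p i) (∑' i, f i • T ^ p i) := by
  intro h
  funext x
  obtain ⟨r, hr⟩ := exists_sub_smul_one_mul_eq_tsum hT (hφlt x) hf p
  have hx := congrArg (fun R : H →L[ℂ] H => e (R h) x) hr
  simp only [mul_apply_eq_comp, sub_apply, smul_apply, one_apply_eq_self, map_sub, map_smul,
    Pi.sub_apply, Pi.smul_apply, smul_eq_mul, hφ (r h), Pi.mul_apply, sub_self] at hx
  rw [Pi.mul_apply]
  linear_combination -hx

end IsMultOp

theorem one_sub_mul_log_one_sub_is_mult_general {X H : Type*} [NormedAddCommGroup H]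
    [InnerProductSpace ℂ H] [CompleteSpace H]
    (e : H →ₗ[ℂ] (X → ℂ))
    (φ : X → ℂ) (Tφ : H →L[ℂ] H) (hφ : IsMultOp e φ Tφ) (hφnorm : ‖Tφ‖ ≤ 1)
    (hφlt : ∀ x, ‖φ x‖ < 1)
    (hid : ∀ x, ‖φ x‖ < 1 →
      (1 - φ x) * Complex.log (1 - φ x)
        = -φ x * (1 - ∑' n : ℕ, φ x ^ (n + 2) / ((n + 2) * (n + 3)))) :
    ∃ Tu : H →L[ℂ] H,
      IsMultOp e (fun x => (1 - φ x) * Complex.log (1 - φ x)) Tu ∧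
      ‖Tu‖ ≤ 1 + ∑' n : ℕ, (1 : ℝ) / ((n + 2) * (n + 3)) ∧ ‖Tu‖ ≤ 3 / 2 := by
  set f : ℕ → ℂ := fun n => (((n : ℂ) + 2) * ((n : ℂ) + 3))⁻¹
  have hsum : HasSum (‖f ·‖) (1 / 2) := by
    convert hasSum_one_div_add_two_mul_add_three with n
    rw [norm_inv, norm_mul, one_div]
    norm_cast
  have hpow := ContinuousLinearMap.norm_pow_le_one hφnorm
  set G := ∑' n, f n • Tφ ^ (n + 2)
  have hG : IsMultOp e (fun x => ∑' n, f n * φ x ^ (n + 2)) G :=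
    hφ.tsum_smul_pow hpow hφlt hsum.summable _
  have hG_norm : ‖G‖ ≤ 1 / 2 := hsum.tsum_eq ▸ norm_tsum_smul_pow_le hpow hsum.summable _
  have hu : (fun x => (1 - φ x) * Complex.log (1 - φ x))
      = -(φ * (1 - fun x => ∑' n, f n * φ x ^ (n + 2))) := by
    funext x
    simp [hid x (hφlt x), f, div_eq_inv_mul]
  have hTu_norm : ‖-(Tφ * (1 - G))‖ ≤ 1 + 1 / 2 :=
    calc ‖-(Tφ * (1 - G))‖ ≤ ‖Tφ‖ * (‖(1 : H →L[ℂ] H)‖ + ‖G‖) := by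
          rw [norm_neg]
          exact (norm_mul_le _ _).trans
            (mul_le_mul_of_nonneg_left (norm_sub_le _ _) (norm_nonneg _))
      _ ≤ 1 * (1 + 1 / 2) := by gcongr; exact hpow 0
      _ = 1 + 1 / 2 := one_mul _
  refine ⟨-(Tφ * (1 - G)), hu ▸ (hφ.mul (IsMultOp.one.sub hG)).neg, ?_, ?_⟩
  · rwa [hasSum_one_div_add_two_mul_add_three.tsum_eq]
  · linarith

/-- If `φ` is a contractive multiplier of a Hilbert function space `H` (with `1` a
multiplier of norm `1`), `φ` not identically `1`, `|φ| < 1` pointwise, and the power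
series identity `(1−φ)log(1−φ) = −φ(1 − Σ_{n≥2} φⁿ/(n(n+1)))` holds pointwise, then
`u = (1−φ)·log(1−φ)` is a multiplier of `H` with
`‖u‖_{Mult} ≤ 1 + Σ_{n≥2} 1/(n(n+1)) ≤ 3/2`. -/
theorem one_sub_mul_log_one_sub_is_mult {X H : Type*} [NormedAddCommGroup H]
    [InnerProductSpace ℂ H] [CompleteSpace H]
    (e : H →ₗ[ℂ] (X → ℂ)) (he : Function.Injective e)
    (T1 : H →L[ℂ] H) (h1 : IsMultOp e (fun _ => 1) T1) (h1norm : ‖T1‖ = 1)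
    (φ : X → ℂ) (Tφ : H →L[ℂ] H) (hφ : IsMultOp e φ Tφ) (hφnorm : ‖Tφ‖ ≤ 1)
    (hφne : φ ≠ fun _ => 1)
    (hφlt : ∀ x, ‖φ x‖ < 1)
    (hid : ∀ x, ‖φ x‖ < 1 →
      (1 - φ x) * Complex.log (1 - φ x)
        = -φ x * (1 - ∑' n : ℕ, φ x ^ (n + 2) / ((n + 2) * (n + 3)))) :
    ∃ Tu : H →L[ℂ] H,
      IsMultOp e (fun x => (1 - φ x) * Complex.log (1 - φ x)) Tu ∧
      ‖Tu‖ ≤ 1 + ∑' n : ℕ, (1 : ℝ) / ((n + 2) * (n + 3)) ∧ ‖Tu‖ ≤ 3 / 2 :=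
  one_sub_mul_log_one_sub_is_mult_general e φ Tφ hφ hφnorm hφlt hid
end
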